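/- arXiv:1602.06776 — 5 statements merged into one kernel-verified Lean document; each statement's English description precedes it below -/
import Mathlib

section
/- For all natural numbers p and q with p + q even, the real Clifford algebra C(p,q) is a simple ring (its only two-sided ideals are 0 and the whole algebra). -/
/-- The quadratic form `Q_{p,q}` on `ℝ^(p+q)`:
`Q_{p,q}(x) = ∑_{i<p} x_i² − ∑_{p≤i<p+q} x_i²`. -/
noncomputable def Qpq (p q : ℕ) : QuadraticForm ℝ (Fin (p + q) → ℝ) :=
  QuadraticMap.weightedSumSquares ℝ (fun i : Fin (p + q) => if (i : ℕ) < p then (1 : ℝ) else -1)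

/-- The real Clifford algebra `C(p,q)`. -/
noncomputable abbrev RealCliffordAlgebra (p q : ℕ) := CliffordAlgebra (Qpq p q)

/-!
Let `e_i` be the generators of the Clifford algebra of `∑ dᵢ xᵢ²` with all `dᵢ ≠ 0`, and `e_S` the
ordered product over `S`. The `e_S` span, and `e_T e_S ∈ K ∙ e_{T ∆ S}`. Conjugation by the unit
`e_i` multiplies `e_S` by `±1`, so averaging `x` with `e_i x e_i⁻¹` keeps the `e_S` commuting with
`e_i`, kills the others, and maps every two-sided ideal into itself. If `|ι|` is even, only
`e_∅ = 1` commutes with every `e_i`, so composing these averages projects onto the scalars. For a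
nonzero `x = ∑ c_S e_S` in an ideal with `c_T ≠ 0`, the projection of `e_T x` is the nonzero scalar
`c_T e_T²`, hence the ideal contains `1`.
-/

open QuadraticMap Finset
open scoped symmDiff

theorem Finset.singleton_symmDiff_of_notMem {α : Type*} [DecidableEq α] {a : α} {s : Finset α}
    (h : a ∉ s) : {a} ∆ s = insert a s :=
  (symmDiff_eq_union (disjoint_singleton_left.2 h)).trans (insert_eq a s).symm

theorem Finset.eq_empty_of_forall_even_card_erase {α : Type*} [Fintype α] [DecidableEq α]
    (hα : Even (Fintype.card α)) {s : Finset α} (h : ∀ a, Even #(s.erase a)) : s = ∅ := by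
  by_contra hs
  obtain ⟨a, ha⟩ := nonempty_iff_ne_empty.2 hs
  have hodd : Odd #s := by
    have h1 := card_pos.2 ⟨a, ha⟩
    have h2 := h a
    rw [card_erase_of_mem ha, Nat.even_iff] at h2
    rw [Nat.odd_iff]
    omega
  obtain ⟨b, hb⟩ : ∃ b, b ∉ s := by
    by_contra! hall
    rw [eq_univ_of_forall hall, card_univ] at hodd
    exact Nat.not_odd_iff_even.2 hα hodd
  exact Nat.not_even_iff_odd.2 hodd (erase_eq_of_notMem hb ▸ h b)

theorem TwoSidedIdeal.eq_top_of_algebraMap_mem {K A : Type*} [Field K] [Ring A] [Algebra K A]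
    (I : TwoSidedIdeal A) {c : K} (hc : c ≠ 0) (h : algebraMap K A c ∈ I) : I = ⊤ := by
  rw [← I.one_mem_iff]
  simpa [← map_mul, inv_mul_cancel₀ hc] using I.mul_mem_left (algebraMap K A c⁻¹) _ h

theorem QuadraticMap.weightedSumSquares_single_one {R ι : Type*} [CommSemiring R] [Fintype ι]
    [DecidableEq ι] (w : ι → R) (i : ι) : weightedSumSquares R w (Pi.single i 1) = w i := by
  simp [weightedSumSquares_apply, Pi.single_apply]

theorem QuadraticMap.isOrtho_weightedSumSquares_single_one {R ι : Type*} [CommSemiring R]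
    [Fintype ι] [DecidableEq ι] (w : ι → R) {i j : ι} (h : i ≠ j) :
    (weightedSumSquares R w).IsOrtho (Pi.single i 1) (Pi.single j 1) := by
  rw [isOrtho_def]
  simp [weightedSumSquares_apply, Pi.single_apply, Finset.sum_add_distrib, mul_add, h, h.symm]

namespace DiagonalClifford

variable {K ι : Type*} [Field K] [Fintype ι] [LinearOrder ι] (d : ι → K)

local notation "𝒞" => CliffordAlgebra (weightedSumSquares K d)

noncomputable def gen (i : ι) : 𝒞 := CliffordAlgebra.ι _ (Pi.single i 1)

noncomputable def monomial (S : Finset ι) : 𝒞 := ((S.sort (· ≤ ·)).map (gen d)).prod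

theorem gen_mul_self (i : ι) : gen d i * gen d i = algebraMap K 𝒞 (d i) := by
  rw [gen, CliffordAlgebra.ι_sq_scalar, weightedSumSquares_single_one]

theorem gen_mul_gen_comm {i j : ι} (h : i ≠ j) : gen d i * gen d j = -(gen d j * gen d i) :=
  CliffordAlgebra.ι_mul_ι_comm_of_isOrtho (isOrtho_weightedSumSquares_single_one d h)

@[simp] theorem monomial_empty : monomial d ∅ = 1 := by simp [monomial]

@[simp] theorem monomial_singleton (i : ι) : monomial d {i} = gen d i := by simp [monomial]

theorem monomial_insert {a : ι} {S : Finset ι} (h : ∀ x ∈ S, a < x) :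
    monomial d (insert a S) = gen d a * monomial d S := by
  rw [monomial, Finset.sort_insert (r := (· ≤ ·)) (fun b hb => (h b hb).le)
    fun ha => (h a ha).false, List.map_cons, List.prod_cons, monomial]

theorem gen_mul_monomial_comm (i : ι) (S : Finset ι) :
    gen d i * monomial d S = (-1 : K) ^ #(S.erase i) • (monomial d S * gen d i) := by
  induction S using Finset.induction_on_min with
  | empty => simp
  | insert a S hlt ih =>
    have ha : a ∉ S := fun h => (hlt a h).false
    rw [monomial_insert d hlt]
    rcases eq_or_ne i a with rfl | hia
    · rw [Finset.erase_insert ha]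
      rw [Finset.erase_eq_of_notMem ha] at ih
      calc gen d i * (gen d i * monomial d S) = algebraMap K 𝒞 (d i) * monomial d S := by
            rw [← mul_assoc, gen_mul_self]
        _ = (-1 : K) ^ #S • ((-1 : K) ^ #S • (monomial d S * (gen d i * gen d i))) := by
            simp [smul_smul, ← mul_pow, gen_mul_self, Algebra.commutes]
        _ = (-1 : K) ^ #S • (gen d i * monomial d S * gen d i) := by
            rw [ih, smul_mul_assoc, mul_assoc]
    · rw [← mul_assoc, gen_mul_gen_comm d hia, Finset.erase_insert_of_ne hia.symm,
        Finset.card_insert_of_notMem fun h => ha (Finset.mem_of_mem_erase h), neg_mul, mul_assoc,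
        ih, mul_smul_comm, pow_succ, mul_comm, ← smul_smul, neg_one_smul, mul_assoc]

theorem gen_mul_monomial_mul_gen (i : ι) (S : Finset ι) :
    gen d i * monomial d S * gen d i = ((-1 : K) ^ #(S.erase i) * d i) • monomial d S := by
  rw [gen_mul_monomial_comm, smul_mul_assoc, mul_assoc, gen_mul_self, ← Algebra.commutes,
    ← Algebra.smul_def, smul_smul]

theorem monomial_mul_self (hd : ∀ i, d i ≠ 0) (S : Finset ι) :
    ∃ c : K, c ≠ 0 ∧ monomial d S * monomial d S = algebraMap K 𝒞 c := by
  induction S using Finset.induction_on_min with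
  | empty => exact ⟨1, one_ne_zero, by simp⟩
  | insert a S hlt ih =>
    obtain ⟨c, hc, hS⟩ := ih
    refine ⟨(-1) ^ #(S.erase a) * d a * c, by simp [hd a, hc], ?_⟩
    rw [monomial_insert d hlt, ← mul_assoc, gen_mul_monomial_mul_gen, smul_mul_assoc, hS,
      Algebra.smul_def, ← map_mul]

theorem gen_mul_monomial (i : ι) (S : Finset ι) :
    ∃ c : K, gen d i * monomial d S = c • monomial d ({i} ∆ S) := by
  induction S using Finset.induction_on_min with
  | empty =>
    exact ⟨1, by
      rw [monomial_empty, mul_one, one_smul, ← bot_eq_empty, symmDiff_bot, monomial_singleton]⟩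
  | insert a S hlt ih =>
    have ha : a ∉ S := fun h => (hlt a h).false
    rw [monomial_insert d hlt]
    rcases lt_trichotomy i a with hia | rfl | hai
    · have hi : ∀ x ∈ insert a S, i < x := by
        simpa [hia] using fun x hx => hia.trans (hlt x hx)
      refine ⟨1, ?_⟩
      rw [one_smul, Finset.singleton_symmDiff_of_notMem fun h => (hi i h).false,
        monomial_insert d hi, monomial_insert d hlt]
    · refine ⟨d i, ?_⟩
      rw [← mul_assoc, gen_mul_self, ← Algebra.smul_def, ← Finset.singleton_symmDiff_of_notMem ha,
        symmDiff_symmDiff_cancel_left]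
    · obtain ⟨c, hc⟩ := ih
      have ha' : ∀ x ∈ {i} ∆ S, a < x := by
        intro x hx
        rcases Finset.mem_symmDiff.1 hx with ⟨hx, -⟩ | ⟨hx, -⟩
        · exact Finset.mem_singleton.1 hx ▸ hai
        · exact hlt x hx
      refine ⟨-c, ?_⟩
      rw [← mul_assoc, gen_mul_gen_comm d hai.ne', neg_mul, mul_assoc, hc, mul_smul_comm,
        ← monomial_insert d ha', ← Finset.singleton_symmDiff_of_notMem fun h => (ha' a h).false,
        ← Finset.singleton_symmDiff_of_notMem ha, symmDiff_left_comm, neg_smul]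

theorem monomial_mul_monomial (A B : Finset ι) :
    ∃ c : K, monomial d A * monomial d B = c • monomial d (A ∆ B) := by
  induction A using Finset.induction_on_min with
  | empty => exact ⟨1, by rw [monomial_empty, one_mul, one_smul, ← bot_eq_empty, bot_symmDiff]⟩
  | insert a A hlt ih =>
    obtain ⟨c, hc⟩ := ih
    obtain ⟨c', hc'⟩ := gen_mul_monomial d a (A ∆ B)
    refine ⟨c * c', ?_⟩
    rw [monomial_insert d hlt, mul_assoc, hc, mul_smul_comm, hc', smul_smul, ← symmDiff_assoc,
      Finset.singleton_symmDiff_of_notMem fun h => (hlt a h).false]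

theorem ι_eq_sum (v : ι → K) :
    CliffordAlgebra.ι (weightedSumSquares K d) v = ∑ i, v i • gen d i := by
  conv_lhs => rw [← Finset.univ_sum_single v]
  simp only [map_sum, gen, ← map_smul, ← Pi.single_smul, smul_eq_mul, mul_one]

theorem span_range_monomial : Submodule.span K (Set.range (monomial d)) = ⊤ := by
  refine Submodule.eq_top_iff'.2 fun x => ?_
  induction x using CliffordAlgebra.left_induction with
  | algebraMap r =>
    rw [Algebra.algebraMap_eq_smul_one, ← monomial_empty d]
    exact Submodule.smul_mem _ r (Submodule.subset_span ⟨∅, rfl⟩)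
  | add x y hx hy => exact add_mem hx hy
  | ι_mul x v hx =>
    induction hx using Submodule.span_induction with
    | mem y hy =>
      obtain ⟨S, rfl⟩ := hy
      rw [ι_eq_sum, Finset.sum_mul]
      refine sum_mem fun i _ => ?_
      obtain ⟨c, hc⟩ := gen_mul_monomial d i S
      rw [smul_mul_assoc, hc, smul_smul]
      exact Submodule.smul_mem _ _ (Submodule.subset_span ⟨_, rfl⟩)
    | zero => simp
    | add y z _ _ hy hz => rw [mul_add]; exact add_mem hy hz
    | smul a y _ hy => rw [mul_smul_comm]; exact Submodule.smul_mem _ a hy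

section Averaging

variable [Invertible (2 : K)]

/-- Since `e_i⁻¹ = (d i)⁻¹ • e_i`, this is `x ↦ ½ (x + e_i x e_i⁻¹)`. -/
noncomputable def conjAverage (i : ι) : Module.End K 𝒞 :=
  ⅟(2 : K) • (1 + (d i)⁻¹ • (LinearMap.mulRight K (gen d i) ∘ₗ LinearMap.mulLeft K (gen d i)))

theorem conjAverage_apply (i : ι) (x : 𝒞) :
    conjAverage d i x = ⅟(2 : K) • (x + (d i)⁻¹ • (gen d i * x * gen d i)) := rfl

theorem conjAverage_monomial {i : ι} (hi : d i ≠ 0) (S : Finset ι) :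
    conjAverage d i (monomial d S) = if Even #(S.erase i) then monomial d S else 0 := by
  rw [conjAverage_apply, gen_mul_monomial_mul_gen, smul_smul, mul_comm, mul_assoc,
    mul_inv_cancel₀ hi, mul_one]
  split_ifs with h
  · rw [h.neg_one_pow, one_smul, ← two_smul K, smul_smul, invOf_mul_self, one_smul]
  · rw [(Nat.not_even_iff_odd.1 h).neg_one_pow, neg_one_smul, add_neg_cancel, smul_zero]

theorem conjAverage_mem {I : TwoSidedIdeal 𝒞} (i : ι) {x : 𝒞} (hx : x ∈ I) :
    conjAverage d i x ∈ I := by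
  rw [conjAverage_apply, Algebra.smul_def, Algebra.smul_def]
  exact I.mul_mem_left _ _ <| I.add_mem hx <| I.mul_mem_left _ _ <|
    I.mul_mem_right _ _ <| I.mul_mem_left _ _ hx

theorem list_prod_conjAverage_monomial (hd : ∀ i, d i ≠ 0) (l : List ι) (S : Finset ι) :
    (l.map (conjAverage d)).prod (monomial d S) =
      if ∀ i ∈ l, Even #(S.erase i) then monomial d S else 0 := by
  induction l with
  | nil => simp
  | cons j l ih =>
    rw [List.map_cons, List.prod_cons, Module.End.mul_apply, ih]
    split_ifs <;> simp_all [conjAverage_monomial d (hd _)]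

noncomputable def conjAverageAll : Module.End K 𝒞 := (univ.toList.map (conjAverage d)).prod

theorem conjAverageAll_monomial_mul_monomial (hd : ∀ i, d i ≠ 0) (hι : Even (Fintype.card ι))
    (T S : Finset ι) : conjAverageAll d (monomial d T * monomial d S) =
      if S = T then monomial d T * monomial d T else 0 := by
  obtain ⟨c, hc⟩ := monomial_mul_monomial d T S
  have hall : (∀ i ∈ univ.toList, Even #((T ∆ S).erase i)) ↔ S = T := by
    simp only [mem_toList, mem_univ, true_implies]
    refine ⟨fun h => (symmDiff_eq_empty.1 (eq_empty_of_forall_even_card_erase hι h)).symm, ?_⟩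
    rintro rfl i
    simp
  rw [conjAverageAll, hc, map_smul, list_prod_conjAverage_monomial d hd]
  simp only [hall]
  split_ifs with h
  · subst h
    rw [hc, symmDiff_self, bot_eq_empty, monomial_empty]
  · exact smul_zero c

theorem conjAverageAll_mem {I : TwoSidedIdeal 𝒞} {x : 𝒞} (hx : x ∈ I) :
    conjAverageAll d x ∈ I :=
  List.prod_induction (fun f : Module.End K 𝒞 => ∀ x ∈ I, f x ∈ I)
    (fun _ _ hf hg _ hx => hf _ (hg _ hx)) (fun _ hx => hx)
    (by simpa using fun i _ => conjAverage_mem d i) x hx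

theorem isSimpleRing (hd : ∀ i, d i ≠ 0) (hι : Even (Fintype.card ι)) : IsSimpleRing 𝒞 := by
  refine .of_eq_bot_or_eq_top fun I => or_iff_not_imp_left.2 fun hI => ?_
  obtain ⟨x, hxI, hx0 : x ≠ 0⟩ := SetLike.exists_of_lt (bot_lt_iff_ne_bot.2 hI)
  obtain ⟨coef, rfl⟩ := (Submodule.mem_span_range_iff_exists_fun K).1
    (span_range_monomial d ▸ Submodule.mem_top : x ∈ Submodule.span K (Set.range (monomial d)))
  obtain ⟨T, hT⟩ : ∃ T, coef T ≠ 0 := by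
    by_contra! h
    simp [h] at hx0
  obtain ⟨c, hc, hTT⟩ := monomial_mul_self d hd T
  have hproj : conjAverageAll d (monomial d T * ∑ S, coef S • monomial d S) =
      algebraMap K 𝒞 (coef T * c) := by
    simp only [Finset.mul_sum, mul_smul_comm, map_sum, map_smul,
      conjAverageAll_monomial_mul_monomial d hd hι, smul_ite, smul_zero, Finset.sum_ite_eq',
      mem_univ, if_true, hTT]
    rw [map_mul, Algebra.smul_def]
  exact I.eq_top_of_algebraMap_mem (mul_ne_zero hT hc)
    (hproj ▸ conjAverageAll_mem d (I.mul_mem_left _ _ hxI))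

end Averaging

end DiagonalClifford

/-- For `p + q` even, the real Clifford algebra `C(p,q)` is a simple ring. -/
theorem real_clifford_simple (p q : ℕ) (h : Even (p + q)) :
    IsSimpleRing (RealCliffordAlgebra p q) :=
  DiagonalClifford.isSimpleRing _ (fun i => by split_ifs <;> norm_num) (by simpa using h)
end

section
/- Every automorphism of a complex Clifford algebra of even rank is inner: for every even natural number n and every ℂ-algebra automorphism φ of ℂCl(n), there exists an invertible element u of ℂCl(n) such that φ(x) = u * x * u⁻¹ for all x in ℂCl(n). -/
/-- The quadratic form `Qℂ_n` on `ℂ^n`: `Qℂ_n(x) = ∑_{i<n} x_i²`. -/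
noncomputable def Qc (n : ℕ) : QuadraticForm ℂ (Fin n → ℂ) :=
  QuadraticMap.weightedSumSquares ℂ (fun _ : Fin n => (1 : ℂ))

/-- The complex Clifford algebra `ℂCl(n)`. -/
noncomputable abbrev ComplexCliffordAlgebra (n : ℕ) := CliffordAlgebra (Qc n)

/-!
Over `ℂ`, `x₀² + x₁² = (x₀ - i x₁)(x₀ + i x₁)`, so `x ↦ !![ι x', x₀ - i x₁; x₀ + i x₁, -ι x']`
(with `x'` the last `n` coordinates of `x`) squares to `Qℂ_{n+2}(x)` and induces an algebra map
`ℂCl(n+2) → M₂(ℂCl(n))`. The images of `e₀` and `e₁` are Pauli matrices, which produce all matrix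
units, and together with the images of the `e_{k+2}` they produce the scalar matrices; so the map
is onto, and it is an isomorphism because both sides have dimension `2^(n+2)`. Hence
`ℂCl(2m) ≅ M_{2^m}(ℂ) ≅ End(ℂ^{2^m})`, and every automorphism of an endomorphism algebra of a
vector space is conjugation by a linear automorphism.
-/

open Module

def Algebra.AutsAreInner (R A : Type*) [CommSemiring R] [Semiring A] [Algebra R A] : Prop :=
  ∀ φ : A ≃ₐ[R] A, ∃ u : Aˣ, ∀ x, φ x = u * x * ↑u⁻¹

namespace Algebra.AutsAreInner

variable {R A B : Type*} [CommSemiring R] [Semiring A] [Semiring B] [Algebra R A] [Algebra R B]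

theorem of_algEquiv (e : A ≃ₐ[R] B) (h : AutsAreInner R B) : AutsAreInner R A := by
  intro φ
  obtain ⟨u, hu⟩ := h ((e.symm.trans φ).trans e)
  refine ⟨Units.map e.symm.toMonoidHom u, fun x => ?_⟩
  simpa using congrArg e.symm (hu (e x))

end Algebra.AutsAreInner

theorem Module.End.autsAreInner {K V : Type*} [Semifield K] [AddCommMonoid V] [Module K V]
    [Projective K V] : Algebra.AutsAreInner K (Module.End K V) := by
  intro φ
  obtain ⟨T, rfl⟩ := φ.eq_linearEquivConjAlgEquiv
  exact ⟨(LinearMap.GeneralLinearGroup.generalLinearEquiv K V).symm T, fun x => rfl⟩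

theorem Matrix.autsAreInner {K n : Type*} [Semifield K] [Fintype n] [DecidableEq n] :
    Algebra.AutsAreInner K (Matrix n n K) :=
  Module.End.autsAreInner.of_algEquiv Matrix.toLinAlgEquiv'

namespace CliffordAlgebra

variable {K M : Type*} [Field K] [Invertible (2 : K)] [AddCommGroup M] [Module K M]
  [FiniteDimensional K M] (Q : QuadraticForm K M)

noncomputable def exteriorBasis : Basis (Finset (Fin (finrank K M))) K (CliffordAlgebra Q) :=
  (finBasis K M).ExteriorAlgebra.map (equivExterior Q).symm

instance : FiniteDimensional K (CliffordAlgebra Q) := .of_basis (exteriorBasis Q)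

theorem finrank_eq_two_pow : finrank K (CliffordAlgebra Q) = 2 ^ finrank K M := by
  simp [finrank_eq_card_basis (exteriorBasis Q)]

end CliffordAlgebra

theorem Matrix.mul_self_fin_two_of_commute {R : Type*} [Ring R] {t a b : R} (hta : Commute t a)
    (htb : Commute t b) (hab : Commute a b) :
    !![t, a; b, -t] * !![t, a; b, -t] = Matrix.scalar (Fin 2) (t * t + a * b) := by
  ext i j
  fin_cases i <;> fin_cases j <;> simp [hta.eq, htb.eq, hab.eq, add_comm]

theorem Qc_apply (n : ℕ) (x : Fin n → ℂ) : Qc n x = ∑ i, x i * x i := by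
  simp [Qc, QuadraticMap.weightedSumSquares_apply]

namespace ComplexCliffordAlgebra

open CliffordAlgebra Matrix Complex

variable (n : ℕ)

noncomputable def dropTwo : (Fin (n + 2) → ℂ) →ₗ[ℂ] Fin n → ℂ :=
  LinearMap.funLeft ℂ ℂ (Fin.succ ∘ Fin.succ)

noncomputable def toMatrixLin :
    (Fin (n + 2) → ℂ) →ₗ[ℂ] Matrix (Fin 2) (Fin 2) (ComplexCliffordAlgebra n) where
  toFun x := !![ι (Qc n) (dropTwo n x), algebraMap ℂ _ (x 0 - I * x 1);
    algebraMap ℂ _ (x 0 + I * x 1), -ι (Qc n) (dropTwo n x)]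
  map_add' x y := by
    ext i j; fin_cases i <;> fin_cases j <;> simp [mul_add] <;> abel
  map_smul' c x := by
    ext i j
    fin_cases i <;> fin_cases j <;>
      simp [Algebra.smul_def (A := ComplexCliffordAlgebra n), mul_sub, mul_add, mul_left_comm]

theorem Qc_add_two (x : Fin (n + 2) → ℂ) :
    Qc (n + 2) x = Qc n (dropTwo n x) + (x 0 - I * x 1) * (x 0 + I * x 1) := by
  simp only [Qc_apply, Fin.sum_univ_succ, dropTwo, LinearMap.funLeft_apply, Function.comp_apply,
    Fin.succ_zero_eq_one]
  linear_combination (x 1 * x 1) * I_sq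

theorem toMatrixLin_mul_self (x : Fin (n + 2) → ℂ) :
    toMatrixLin n x * toMatrixLin n x = algebraMap ℂ _ (Qc (n + 2) x) := by
  rw [toMatrixLin, LinearMap.coe_mk, AddHom.coe_mk, mul_self_fin_two_of_commute
    (Algebra.commutes _ _).symm (Algebra.commutes _ _).symm
    ((Commute.all _ _).map (algebraMap ℂ _)), ι_sq_scalar, ← map_mul, ← map_add, ← Qc_add_two]
  rfl

noncomputable def toMatrix :
    ComplexCliffordAlgebra (n + 2) →ₐ[ℂ] Matrix (Fin 2) (Fin 2) (ComplexCliffordAlgebra n) :=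
  lift _ ⟨toMatrixLin n, toMatrixLin_mul_self n⟩

theorem toMatrix_ι_cons_cons (a b : ℂ) (v : Fin n → ℂ) :
    toMatrix n (ι _ (Fin.cons a (Fin.cons b v))) =
      !![ι (Qc n) v, algebraMap ℂ _ (a - I * b); algebraMap ℂ _ (a + I * b), -ι (Qc n) v] :=
  lift_ι_apply _ _ _

theorem pauliX_mem_range : !![0, 1; 1, 0] ∈ (toMatrix n).range :=
  ⟨ι _ (Fin.cons 1 (Fin.cons 0 0)), by simp [toMatrix_ι_cons_cons]⟩

theorem pauliZ_mem_range : !![1, 0; 0, -1] ∈ (toMatrix n).range := by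
  have hY : toMatrix n (ι _ (Fin.cons 0 (Fin.cons 1 0))) =
      !![0, algebraMap ℂ _ (-I); algebraMap ℂ _ I, 0] := by
    simp [toMatrix_ι_cons_cons]
  convert Subalgebra.smul_mem _ (mul_mem (pauliX_mem_range n) ⟨_, hY⟩) (-I) using 1
  ext i j
  fin_cases i <;> fin_cases j <;> simp [Algebra.smul_def, ← map_mul]

theorem scalar_mem_range (a : ComplexCliffordAlgebra n) :
    scalar (Fin 2) a ∈ (toMatrix n).range := by
  suffices h : (toMatrix n).range.comap (scalarAlgHom (Fin 2) ℂ) = ⊤ from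
    (h ▸ Algebra.mem_top : a ∈ (toMatrix n).range.comap (scalarAlgHom (Fin 2) ℂ))
  rw [eq_top_iff, ← adjoin_range_ι, Algebra.adjoin_le_iff]
  rintro _ ⟨v, rfl⟩
  change scalar (Fin 2) (ι (Qc n) v) ∈ (toMatrix n).range
  convert mul_mem (pauliZ_mem_range n) ⟨_, toMatrix_ι_cons_cons n 0 0 v⟩ using 1
  ext i j
  fin_cases i <;> fin_cases j <;> simp

theorem single_one_mem_range (i j : Fin 2) :
    single i j 1 ∈ (toMatrix n).range := by
  have h00 : single 0 0 1 ∈ (toMatrix n).range := by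
    convert Subalgebra.smul_mem _ (add_mem (one_mem _) (pauliZ_mem_range n)) (2⁻¹ : ℂ) using 1
    ext i j
    fin_cases i <;> fin_cases j <;> simp [one_fin_two, ← add_smul]
    norm_num
  have hX := pauliX_mem_range n
  fin_cases i <;> fin_cases j
  · exact h00
  · convert mul_mem h00 hX using 1
    ext i j
    fin_cases i <;> fin_cases j <;> simp
  · convert mul_mem hX h00 using 1
    ext i j
    fin_cases i <;> fin_cases j <;> simp
  · convert sub_mem (one_mem _) h00 using 1
    ext i j
    fin_cases i <;> fin_cases j <;> simp [one_fin_two]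

theorem toMatrix_surjective : Function.Surjective (toMatrix n) := by
  intro M
  suffices M ∈ (toMatrix n).range from this
  rw [matrix_eq_sum_single M]
  refine sum_mem fun i _ => sum_mem fun j _ => ?_
  have : single i j (M i j) = scalar (Fin 2) (M i j) * single i j 1 := by
    rw [scalar_apply, ← smul_eq_diagonal_mul, smul_single, smul_eq_mul, mul_one]
  exact this ▸ mul_mem (scalar_mem_range n _) (single_one_mem_range n i j)

theorem toMatrix_bijective : Function.Bijective (toMatrix n) := by
  have hdim : finrank ℂ (ComplexCliffordAlgebra (n + 2)) =
      finrank ℂ (Matrix (Fin 2) (Fin 2) (ComplexCliffordAlgebra n)) := by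
    simp [finrank_eq_two_pow, finrank_matrix, pow_add]
    ring
  exact ⟨(LinearMap.injective_iff_surjective_of_finrank_eq_finrank
    (f := (toMatrix n).toLinearMap) hdim).mpr (toMatrix_surjective n), toMatrix_surjective n⟩

noncomputable def equivMatrix :
    ComplexCliffordAlgebra (n + 2) ≃ₐ[ℂ] Matrix (Fin 2) (Fin 2) (ComplexCliffordAlgebra n) :=
  .ofBijective _ (toMatrix_bijective n)

theorem nonempty_algEquiv_matrix (m : ℕ) :
    Nonempty (ComplexCliffordAlgebra (m + m) ≃ₐ[ℂ] Matrix (Fin (2 ^ m)) (Fin (2 ^ m)) ℂ) := by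
  induction m with
  | zero =>
    have hCl : Function.Bijective (algebraMap ℂ (ComplexCliffordAlgebra 0)) :=
      Algebra.finrank_eq_one_iff_bijective_algebraMap.mp (by simp [finrank_eq_two_pow])
    have hMat : Function.Bijective (algebraMap ℂ (Matrix (Fin (2 ^ 0)) (Fin (2 ^ 0)) ℂ)) :=
      Algebra.finrank_eq_one_iff_bijective_algebraMap.mp (by simp [finrank_matrix])
    exact ⟨(AlgEquiv.ofBijective (Algebra.ofId ℂ _) hCl).symm.trans
      (AlgEquiv.ofBijective (Algebra.ofId ℂ _) hMat)⟩
  | succ m ih =>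
    obtain ⟨e⟩ := ih
    rw [show m + 1 + (m + 1) = m + m + 2 by omega]
    exact ⟨(equivMatrix _).trans <| e.mapMatrix.trans <| (compAlgEquiv _ _ ℂ ℂ).trans <|
      reindexAlgEquiv ℂ ℂ (finProdFinEquiv.trans (finCongr (pow_succ' 2 m).symm))⟩

end ComplexCliffordAlgebra

/-- Every `ℂ`-algebra automorphism of a complex Clifford algebra of even rank is inner. -/
theorem complex_clifford_aut_inner (n : ℕ) (hn : Even n)
    (φ : ComplexCliffordAlgebra n ≃ₐ[ℂ] ComplexCliffordAlgebra n) :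
    ∃ u : (ComplexCliffordAlgebra n)ˣ,
      ∀ x : ComplexCliffordAlgebra n, φ x = ↑u * x * ↑u⁻¹ := by
  obtain ⟨m, rfl⟩ := hn
  obtain ⟨e⟩ := ComplexCliffordAlgebra.nonempty_algEquiv_matrix m
  exact Matrix.autsAreInner.of_algEquiv e φ
end

section
/- For every odd natural number n, the complex Clifford algebra ℂCl(n) admits two inequivalent irreducible representations: there exist two simple ℂCl(n)-modules that are not isomorphic as ℂCl(n)-modules. -/
/-!
For odd `n` the volume element `ω = e₀ ⋯ e_{n-1}` of `ℂCl(n)` is central, its square is the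
nonzero scalar `s² = (-1)^(n choose 2)`, and the grade involution `α` sends it to `-ω`.
By Schur's lemma `ω` acts on a simple module `M` by `s` or by `-s`; on the twist of `M` by `α`
it then acts by the opposite scalar, so `M` and its twist are non-isomorphic simple modules.
-/

theorem List.prod_ofFn_mul_eq_zsmul_mul {A : Type*} [Ring A] {n : ℕ} (f : Fin n → A)
    (ε : Fin n → ℤ) {x : A} (h : ∀ i, f i * x = ε i • (x * f i)) :
    (List.ofFn f).prod * x = (∏ i, ε i) • (x * (List.ofFn f).prod) := by
  induction n with
  | zero => simp
  | succ n ih =>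
    rw [List.ofFn_succ, List.prod_cons, Fin.prod_univ_succ, mul_assoc,
      ih (fun i ↦ f i.succ) (fun i ↦ ε i.succ) (fun i ↦ h i.succ), mul_smul_comm, ← mul_assoc,
      h 0, smul_mul_assoc, smul_smul, mul_assoc, mul_comm (ε 0)]

namespace CliffordAlgebra

variable {R M : Type*} [CommRing R] [AddCommGroup M] [Module R M] {Q : QuadraticForm R M}
  {n : ℕ} {v : Fin n → M}

variable (Q) in
/-- When `v` is an orthogonal basis, this is the volume element of `CliffordAlgebra Q`. -/
noncomputable def volumeElement (v : Fin n → M) : CliffordAlgebra Q :=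
  (List.ofFn fun i ↦ ι Q (v i)).prod

theorem volumeElement_mul_self (hv : Pairwise fun i j ↦ Q.IsOrtho (v i) (v j)) :
    volumeElement Q v * volumeElement Q v =
      algebraMap R _ ((-1) ^ n.choose 2 * ∏ i, Q (v i)) := by
  induction n with
  | zero => simp [volumeElement]
  | succ n ih =>
    set e := ι Q (v 0)
    set ω := volumeElement Q fun i : Fin n ↦ v i.succ
    have hω : ω * ω = algebraMap R _ ((-1) ^ n.choose 2 * ∏ i : Fin n, Q (v i.succ)) :=
      ih fun i j hij ↦ hv (Fin.succ_injective _ |>.ne hij)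
    have hωe : ω * e = (-1 : ℤ) ^ n • (e * ω) := by
      have := List.prod_ofFn_mul_eq_zsmul_mul (fun i : Fin n ↦ ι Q (v i.succ)) (fun _ ↦ -1)
        fun i ↦ by rw [ι_mul_ι_comm_of_isOrtho (hv (Fin.succ_ne_zero i)), neg_one_smul]
      rwa [Finset.prod_const, Finset.card_univ, Fintype.card_fin] at this
    rw [volumeElement, List.ofFn_succ, List.prod_cons, ← volumeElement]
    calc e * ω * (e * ω) = e * (ω * e) * ω := by simp only [mul_assoc]
      _ = (-1 : ℤ) ^ n • (e * e * (ω * ω)) := by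
        rw [hωe, mul_smul_comm, smul_mul_assoc, mul_assoc, mul_assoc, mul_assoc]
      _ = algebraMap R _ ((-1) ^ (n + 1).choose 2 * ∏ i, Q (v i)) := by
        rw [ι_sq_scalar, hω, ← map_mul, ← map_zsmul, Fin.prod_univ_succ, Nat.choose_succ_succ',
          Nat.choose_one_right, pow_add, zsmul_eq_mul]
        congr 1
        push_cast
        ring

theorem involute_volumeElement (v : Fin n → M) :
    involute (volumeElement Q v) = (-1) ^ n * volumeElement Q v := by
  simp only [volumeElement, map_list_prod, List.map_ofFn, Function.comp_def, involute_ι]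
  simpa [Function.comp_def] using List.prod_map_neg (List.ofFn fun i ↦ ι Q (v i))

theorem commute_ι_volumeElement (hv : Pairwise fun i j ↦ Q.IsOrtho (v i) (v j)) (hn : Odd n)
    (j : Fin n) : Commute (ι Q (v j)) (volumeElement Q v) := by
  have hsign (i : Fin n) :
      ι Q (v i) * ι Q (v j) = (if i = j then 1 else -1 : ℤ) • (ι Q (v j) * ι Q (v i)) := by
    split_ifs with h
    · rw [h, one_smul]
    · rw [ι_mul_ι_comm_of_isOrtho (hv h), neg_one_smul]
  have h := List.prod_ofFn_mul_eq_zsmul_mul _ _ hsign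
  simp only [Finset.prod_ite, Finset.prod_const_one, Finset.prod_const, Finset.filter_ne',
    Finset.mem_univ, Finset.card_erase_of_mem, Finset.card_univ, Fintype.card_fin, one_mul] at h
  rw [(Nat.Odd.sub_odd hn odd_one).neg_one_pow, one_smul] at h
  exact h.symm

theorem volumeElement_mem_center (hv : Pairwise fun i j ↦ Q.IsOrtho (v i) (v j))
    (hspan : Submodule.span R (Set.range v) = ⊤) (hn : Odd n) :
    volumeElement Q v ∈ Set.center (CliffordAlgebra Q) := by
  have hι (m : M) : Commute (ι Q m) (volumeElement Q v) := by
    have : (LinearMap.mulRight R (volumeElement Q v)).comp (ι Q) =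
        (LinearMap.mulLeft R (volumeElement Q v)).comp (ι Q) :=
      LinearMap.ext_on_range hspan fun j ↦ commute_ι_volumeElement hv hn j
    exact LinearMap.congr_fun this m
  have hcentralizer : ⊤ ≤ Subalgebra.centralizer R {volumeElement Q v} := by
    rw [← adjoin_range_ι, Algebra.adjoin_le_iff]
    rintro _ ⟨m, rfl⟩
    exact (Subalgebra.mem_centralizer_iff R).mpr fun _ h ↦ h ▸ (hι m).symm.eq
  exact Semigroup.mem_center_iff.mpr fun x ↦
    ((Subalgebra.mem_centralizer_iff R).mp (hcentralizer Algebra.mem_top) _ rfl).symm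

end CliffordAlgebra

theorem IsSimpleModule.smul_eq_or_smul_eq_neg {R M : Type*} [Ring R] [AddCommGroup M]
    [Module R M] [IsSimpleModule R M] {z a : R} (hz : z ∈ Set.center R) (ha : a ∈ Set.center R)
    (h : z * z = a * a) :
    (∀ m : M, z • m = a • m) ∨ ∀ m : M, z • m = -a • m := by
  have hfactor : (z + a) * (z - a) = 0 := by
    rw [add_mul, mul_sub, mul_sub, h, ((Set.mem_center_iff.mp ha).comm z).eq]
    abel
  rcases (Module.End.smulLeft (M := M) (z + a) (Set.add_mem_center hz ha)).injective_or_eq_zero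
    with hinj | hzero
  · left
    intro m
    rw [← sub_eq_zero, ← sub_smul]
    apply hinj
    simp only [Module.End.smulLeft_apply, smul_smul, hfactor, zero_smul, smul_zero]
  · right
    intro m
    have := LinearMap.congr_fun hzero m
    rwa [Module.End.smulLeft_apply, LinearMap.zero_apply, add_smul, add_eq_zero_iff_eq_neg,
      ← neg_smul] at this

universe u v w

namespace ModuleCat

theorem exists_isSimpleModule (R : Type u) [Ring R] [Nontrivial R] :
    ∃ M : ModuleCat.{u} R, IsSimpleModule R M := by
  obtain ⟨I, hI⟩ := Ideal.exists_maximal R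
  exact ⟨of R (R ⧸ I), isSimpleModule_iff_isCoatom.mpr (Ideal.isMaximal_def.mp hI)⟩

theorem isSimpleModule_restrictScalars {R S : Type*} [Ring R] [Ring S] (σ : R ≃+* S)
    (M : ModuleCat S) [IsSimpleModule S M] :
    IsSimpleModule R ((restrictScalars (σ : R →+* S)).obj M) :=
  let id : (restrictScalars (σ : R →+* S)).obj M →ₛₗ[(σ : R →+* S)] M :=
    { AddMonoidHom.id M with map_smul' := fun _ _ ↦ rfl }
  (id.isSimpleModule_iff_of_bijective Function.bijective_id).mpr ‹_›

variable {R : Type u} [Ring R]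

theorem isEmpty_linearEquiv_restrictScalars (σ : R ≃+* R) {M : ModuleCat R} [Nontrivial M]
    {z a : R} (hσz : σ z = -z) (hσa : σ a = a) (h2a : IsUnit (2 * a))
    (hzM : ∀ m : M, z • m = a • m) :
    IsEmpty (M ≃ₗ[R] (restrictScalars (σ : R →+* R)).obj M) := by
  refine ⟨fun f ↦ ?_⟩
  obtain ⟨m, hm⟩ := exists_ne (0 : M)
  let x : M := f m
  have hx : a • x = -(a • x) := calc
    a • x = σ a • x := by rw [hσa]
    _ = σ z • x := by
      change a • f m = z • f m
      rw [← map_smul, ← map_smul, hzM]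
    _ = -(a • x) := by rw [hσz, neg_smul, hzM]
  have hx0 : x = 0 := by
    refine h2a.smul_eq_zero.mp ?_
    rw [mul_smul, two_smul]
    nth_rw 1 [hx]
    exact neg_add_cancel _
  exact hm (f.map_eq_zero_iff.mp hx0)

theorem exists_simple_not_linearEquiv [Nontrivial R] (σ : R ≃+* R) {z a : R}
    (hz : z ∈ Set.center R) (ha : a ∈ Set.center R) (hza : z * z = a * a) (hσz : σ z = -z)
    (hσa : σ a = a) (h2a : IsUnit (2 * a)) :
    ∃ (M : ModuleCat.{max u v} R) (N : ModuleCat.{max u w} R), IsSimpleModule R M ∧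
      IsSimpleModule R N ∧ IsEmpty (M ≃ₗ[R] N) := by
  obtain ⟨M, hM⟩ := exists_isSimpleModule R
  have : Nontrivial M := IsSimpleModule.nontrivial R M
  let N := (restrictScalars (σ : R →+* R)).obj M
  have hN : IsSimpleModule R N := isSimpleModule_restrictScalars σ M
  have hMN : IsEmpty (M ≃ₗ[R] N) := by
    rcases hM.smul_eq_or_smul_eq_neg hz ha hza with hzM | hzM
    · exact isEmpty_linearEquiv_restrictScalars σ hσz hσa h2a hzM
    · refine isEmpty_linearEquiv_restrictScalars σ hσz (by rw [map_neg, hσa]) ?_ hzM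
      rwa [mul_neg, IsUnit.neg_iff]
  refine ⟨of R (ULift.{v} M), of R (ULift.{w} N), .congr ULift.moduleEquiv,
    .congr ULift.moduleEquiv, ⟨fun f ↦ hMN.false ?_⟩⟩
  exact ULift.moduleEquiv.symm.trans (f.trans ULift.moduleEquiv)

end ModuleCat

theorem Qc_single (n : ℕ) (i : Fin n) : Qc n (Pi.single i 1) = 1 := by
  simp [Qc, QuadraticMap.weightedSumSquares_apply, Pi.single_apply]

theorem Qc_pairwise_isOrtho_basisFun (n : ℕ) :
    Pairwise fun i j ↦ (Qc n).IsOrtho (Pi.basisFun ℂ (Fin n) i) (Pi.basisFun ℂ (Fin n) j) := by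
  intro i j hij
  rw [QuadraticMap.isOrtho_def]
  simp [Qc, QuadraticMap.weightedSumSquares_apply, Pi.single_apply, mul_add,
    Finset.sum_add_distrib, hij, hij.symm]

open CliffordAlgebra in
/-- For odd `n`, the complex Clifford algebra `ℂCl(n)` admits two inequivalent irreducible
representations: there exist two simple `ℂCl(n)`-modules which are not isomorphic. -/
theorem complex_clifford_two_simple_modules (n : ℕ) (hn : Odd n) :
    ∃ M N : ModuleCat (ComplexCliffordAlgebra n),
      IsSimpleModule (ComplexCliffordAlgebra n) M ∧
      IsSimpleModule (ComplexCliffordAlgebra n) N ∧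
      IsEmpty (M ≃ₗ[ComplexCliffordAlgebra n] N) := by
  set A := ComplexCliffordAlgebra n
  set ω := volumeElement (Qc n) (Pi.basisFun ℂ (Fin n))
  set s : ℂ := Complex.I ^ n.choose 2
  have hω_central : ω ∈ Set.center A :=
    volumeElement_mem_center (Qc_pairwise_isOrtho_basisFun n) (Pi.basisFun ℂ (Fin n)).span_eq hn
  have hω_sq : ω * ω = algebraMap ℂ A s * algebraMap ℂ A s := by
    rw [volumeElement_mul_self (Qc_pairwise_isOrtho_basisFun n), ← map_mul, ← mul_pow,
      Complex.I_mul_I]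
    simp [Qc_single]
  have hω_odd : involute ω = -ω := by
    rw [involute_volumeElement, hn.neg_one_pow, neg_one_mul]
  have h2s : IsUnit (2 * algebraMap ℂ A s) := by
    rw [← map_ofNat (algebraMap ℂ A) 2, ← map_mul]
    exact (isUnit_iff_ne_zero.mpr (mul_ne_zero two_ne_zero (pow_ne_zero _ Complex.I_ne_zero))).map _
  exact ModuleCat.exists_simple_not_linearEquiv involuteEquiv.toRingEquiv hω_central
    (Set.algebraMap_mem_center s) hω_sq hω_odd (AlgHom.commutes _ s) h2s
end

section
/- For all natural numbers p and q with p − q ≡ 1 (mod 8) (so p + q is odd), the real Clifford algebra C(p,q) admits two inequivalent irreducible representations: there exist two simple C(p,q)-modules that are not isomorphic as C(p,q)-modules. -/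
/-!
The pseudoscalar `ω = e₀ e₁ ⋯ e_{p+q-1}` of `C(p,q)` is central because `p + q` is odd, and
`ω² = (-1)^(C(p+q, 2) + q) = 1` because `p - q ≡ 1 (mod 8)`. The grade involution sends `ω` to
`-ω`, so `ω ≠ ±1`; hence `1 - ω` and `1 + ω` are zero divisors, neither is left invertible, and
each of them annihilates some simple module (a quotient by a maximal left ideal containing it).
Since `ω` acts by `1` on the first module and by `-1` on the second, and `2` is invertible,
the two modules are not isomorphic.
-/

universe u v w

section SimpleModules

variable {A : Type u} [Ring A]

theorem exists_isSimpleModule_forall_smul_eq_zero [Small.{v} A] (a : A) (ha : ∀ r, Commute a r)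
    (h : ∀ b, b * a ≠ 1) :
    ∃ M : ModuleCat.{v} A, IsSimpleModule A M ∧ ∀ m : M, a • m = 0 := by
  have hspan : A ∙ a ≠ ⊤ := fun htop =>
    have ⟨b, hb⟩ := Submodule.mem_span_singleton.mp (htop ▸ Submodule.mem_top : (1 : A) ∈ A ∙ a)
    h b hb
  obtain ⟨I, hI, haI⟩ := Ideal.exists_le_maximal _ hspan
  have : IsSimpleModule A (A ⧸ I) := isSimpleModule_iff_isCoatom.mpr hI.out
  let e : Shrink.{v} (A ⧸ I) ≃ₗ[A] A ⧸ I := Shrink.linearEquiv A _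
  refine ⟨.of A (Shrink.{v} (A ⧸ I)), IsSimpleModule.congr e, fun m => e.injective ?_⟩
  obtain ⟨x, hx⟩ := Submodule.Quotient.mk_surjective I (e m)
  rw [map_smul, ← hx, map_zero, ← Submodule.Quotient.mk_smul, smul_eq_mul, (ha x).eq,
    ← smul_eq_mul, Submodule.Quotient.mk_smul, (Submodule.Quotient.mk_eq_zero I).mpr
      (haI (Submodule.mem_span_singleton_self a)), smul_zero]

theorem mul_ne_one_of_mul_eq_zero {a c : A} (hac : a * c = 0) (hc : c ≠ 0) (b : A) :
    b * a ≠ 1 := fun hba => hc <| by rw [← one_mul c, ← hba, mul_assoc, hac, mul_zero]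

theorem ne_one_of_map_eq_neg (σ : A →+* A) {z : A} (hz : σ z = -z)
    (h2 : (2 : A) ≠ 0) : z ≠ 1 := by
  rintro rfl
  rw [map_one, eq_neg_iff_add_eq_zero, one_add_one_eq_two] at hz
  exact h2 hz

theorem ne_neg_one_of_map_eq_neg (σ : A →+* A) {z : A} (hz : σ z = -z)
    (h2 : (2 : A) ≠ 0) : z ≠ -1 := fun h =>
  ne_one_of_map_eq_neg σ (z := -z) (by rw [map_neg, hz]) h2 (neg_eq_iff_eq_neg.mpr h)

theorem exists_isSimpleModule_not_linearEquiv [Small.{v} A] [Small.{w} A] (z : A)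
    (hz : ∀ r, Commute z r) (hz2 : z * z = 1) (hz_ne_one : z ≠ 1) (hz_ne_neg_one : z ≠ -1)
    (h2 : IsUnit (2 : A)) :
    ∃ (M : ModuleCat.{v} A) (N : ModuleCat.{w} A), IsSimpleModule A M ∧ IsSimpleModule A N ∧
      IsEmpty (M ≃ₗ[A] N) := by
  obtain ⟨M, hM, hzM⟩ := exists_isSimpleModule_forall_smul_eq_zero.{u, v} (1 - z)
    (fun r => (Commute.one_left r).sub_left (hz r))
    (mul_ne_one_of_mul_eq_zero (c := 1 + z) (by noncomm_ring; rw [hz2]; abel)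
      fun h => hz_ne_neg_one (eq_neg_of_add_eq_zero_right h))
  obtain ⟨N, hN, hzN⟩ := exists_isSimpleModule_forall_smul_eq_zero.{u, w} (1 + z)
    (fun r => (Commute.one_left r).add_left (hz r))
    (mul_ne_one_of_mul_eq_zero (c := 1 - z) (by noncomm_ring; rw [hz2]; abel)
      fun h => hz_ne_one (sub_eq_zero.mp h).symm)
  refine ⟨M, N, hM, hN, ⟨fun e => ?_⟩⟩
  have := IsSimpleModule.nontrivial A M
  obtain ⟨m, hm⟩ := exists_ne (0 : M)
  have hzm : z • m = m := by simpa [sub_smul, sub_eq_zero, eq_comm] using hzM m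
  have hze : z • e m = -e m :=
    eq_neg_of_add_eq_zero_right (by simpa [add_smul] using hzN (e m))
  have : (2 : A) • e m = 0 := by
    rw [two_smul]
    nth_rewrite 1 [← hzm]
    rw [map_smul, hze, neg_add_cancel]
  exact hm (e.map_eq_zero_iff.mp ((h2.smul_eq_zero).mp this))

end SimpleModules

namespace CliffordAlgebra

variable {R M : Type*} [CommRing R] [AddCommGroup M] [Module R M] {Q : QuadraticForm R M}

theorem ι_mul_prod_map_ι_of_forall_isOrtho {x : M} {l : List M}
    (h : ∀ y ∈ l, Q.IsOrtho x y) :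
    ι Q x * (l.map (ι Q)).prod = (-1 : R) ^ l.length • ((l.map (ι Q)).prod * ι Q x) := by
  induction l with
  | nil => simp
  | cons y t ih =>
    rw [List.map_cons, List.prod_cons, ← mul_assoc, ι_mul_ι_comm_of_isOrtho (h y (by simp)),
      neg_mul, mul_assoc, ih fun y hy => h y (by simp [hy]), mul_smul_comm, ← mul_assoc,
      List.length_cons, pow_succ, mul_neg_one, neg_smul]

theorem ι_mul_prod_map_ι_of_mem {x : M} {l : List M} (hl : l.Pairwise Q.IsOrtho) (hx : x ∈ l) :
    ι Q x * (l.map (ι Q)).prod =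
      (-1 : R) ^ (l.length - 1) • ((l.map (ι Q)).prod * ι Q x) := by
  induction l with
  | nil => simp at hx
  | cons y t ih =>
    rw [List.pairwise_cons] at hl
    rw [List.map_cons, List.prod_cons, List.length_cons, Nat.add_sub_cancel]
    by_cases hxt : x ∈ t
    · obtain ⟨n, hn⟩ := Nat.exists_eq_add_one.mpr (List.length_pos_of_mem hxt)
      rw [← mul_assoc, ι_mul_ι_comm_of_isOrtho (hl.1 x hxt).symm, neg_mul, mul_assoc,
        ih hl.2 hxt, hn, Nat.add_sub_cancel, pow_succ, mul_smul_comm, mul_neg_one, neg_smul,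
        mul_assoc]
    · obtain rfl : x = y := by simpa [hxt] using hx
      rw [mul_assoc, ι_mul_prod_map_ι_of_forall_isOrtho hl.1, mul_smul_comm]

theorem prod_map_ι_mul_self {l : List M} (hl : l.Pairwise Q.IsOrtho) :
    (l.map (ι Q)).prod * (l.map (ι Q)).prod =
      algebraMap R _ ((-1 : R) ^ l.length.choose 2 * (l.map Q).prod) := by
  induction l with
  | nil => simp
  | cons x t ih =>
    rw [List.pairwise_cons] at hl
    set P := (t.map (ι Q)).prod
    calc ι Q x * P * (ι Q x * P)
        = (-1 : R) ^ t.length • (ι Q x * (P * P) * ι Q x) := by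
          nth_rewrite 2 [ι_mul_prod_map_ι_of_forall_isOrtho hl.1]
          simp only [mul_smul_comm, mul_assoc, P]
      _ = (-1 : R) ^ t.length • (algebraMap R _ ((-1 : R) ^ t.length.choose 2 *
            (t.map Q).prod) * (ι Q x * ι Q x)) := by
          rw [ih hl.2, ← Algebra.commutes, mul_assoc]
      _ = _ := by
          rw [ι_sq_scalar, ← map_mul, Algebra.smul_def, ← map_mul, List.map_cons, List.prod_cons,
            List.length_cons, Nat.choose_succ_succ', Nat.choose_one_right, pow_add]
          ring_nf

theorem commute_of_forall_commute_ι {z : CliffordAlgebra Q} (h : ∀ m, Commute z (ι Q m))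
    (a : CliffordAlgebra Q) : Commute z a := by
  induction a using CliffordAlgebra.induction with
  | algebraMap r => exact (Algebra.commutes r z).symm
  | ι m => exact h m
  | mul a b ha hb => exact ha.mul_right hb
  | add a b ha hb => exact ha.add_right hb

end CliffordAlgebra

open CliffordAlgebra

theorem even_choose_two_add {p q : ℕ} (h : ((p : ℤ) - q) % 8 = 1) :
    Even ((p + q).choose 2 + q) := by
  obtain ⟨m, hm, hmq⟩ : ∃ m, p + q = 2 * m + 1 ∧ m % 2 = q % 2 := ⟨(p + q) / 2, by omega⟩
  rw [hm, Nat.choose_two_right, Nat.add_sub_cancel, mul_left_comm,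
    Nat.mul_div_cancel_left _ two_pos, Nat.even_add, Nat.even_mul]
  simp only [Nat.even_iff]
  omega

namespace RealCliffordAlgebra

variable (p q : ℕ)

def stdBasisList : List (Fin (p + q) → ℝ) := List.ofFn fun i => Pi.single i 1

noncomputable def pseudoscalar : RealCliffordAlgebra p q :=
  ((stdBasisList p q).map (ι (Qpq p q))).prod

variable {p q}

theorem Qpq_single (i : Fin (p + q)) :
    Qpq p q (Pi.single i 1) = if (i : ℕ) < p then 1 else -1 := by
  simp [Qpq, Pi.single_apply]

theorem isOrtho_single {i j : Fin (p + q)} (hij : i ≠ j) :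
    (Qpq p q).IsOrtho (Pi.single i 1) (Pi.single j 1) := by
  rw [QuadraticMap.isOrtho_def]
  simp only [Qpq, QuadraticMap.weightedSumSquares_apply, Pi.add_apply, Pi.single_apply]
  rw [← Finset.sum_add_distrib]
  refine Finset.sum_congr rfl fun k _ => ?_
  by_cases hki : k = i <;> by_cases hkj : k = j <;> simp_all

theorem pairwise_isOrtho_stdBasisList : (stdBasisList p q).Pairwise (Qpq p q).IsOrtho :=
  List.pairwise_ofFn.mpr fun _ _ hij => isOrtho_single hij.ne

theorem prod_map_Qpq_stdBasisList : ((stdBasisList p q).map (Qpq p q)).prod = (-1) ^ q := by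
  rw [stdBasisList, List.map_ofFn, List.prod_ofFn]
  simp only [Function.comp_def, Qpq_single]
  rw [Fin.prod_univ_eq_prod_range (fun i => if i < p then (1 : ℝ) else -1), Finset.prod_range_add,
    Finset.prod_eq_one fun i hi => if_pos (Finset.mem_range.mp hi)]
  simp

theorem length_stdBasisList : (stdBasisList p q).length = p + q := List.length_ofFn

theorem pseudoscalar_commute (hodd : Odd (p + q)) (a : RealCliffordAlgebra p q) :
    Commute (pseudoscalar p q) a := by
  refine commute_of_forall_commute_ι (fun m => ?_) a
  rw [pi_eq_sum_univ' m, map_sum]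
  refine Commute.sum_right _ _ _ fun i _ => ?_
  rw [LinearMap.map_smul]
  refine Commute.smul_right (Eq.symm ?_) _
  rw [pseudoscalar, ι_mul_prod_map_ι_of_mem pairwise_isOrtho_stdBasisList
    (List.mem_ofFn.mpr ⟨i, rfl⟩), length_stdBasisList, (Nat.Odd.sub_odd hodd odd_one).neg_one_pow,
    one_smul]

theorem pseudoscalar_mul_self (h : ((p : ℤ) - q) % 8 = 1) :
    pseudoscalar p q * pseudoscalar p q = 1 := by
  rw [pseudoscalar, prod_map_ι_mul_self pairwise_isOrtho_stdBasisList, length_stdBasisList,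
    prod_map_Qpq_stdBasisList, ← pow_add, (even_choose_two_add h).neg_one_pow, map_one]

theorem involute_pseudoscalar (hodd : Odd (p + q)) :
    involute (pseudoscalar p q) = -pseudoscalar p q := by
  rw [pseudoscalar, involute_prod_map_ι, length_stdBasisList, hodd.neg_one_pow, neg_one_smul]

end RealCliffordAlgebra

open RealCliffordAlgebra

/-- For `p − q ≡ 1 (mod 8)`, the real Clifford algebra `C(p,q)` admits two inequivalent
irreducible representations: there exist two simple `C(p,q)`-modules which are not
isomorphic. -/
theorem real_clifford_two_simple_modules (p q : ℕ) (h : ((p : ℤ) - q) % 8 = 1) :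
    ∃ M N : ModuleCat (RealCliffordAlgebra p q),
      IsSimpleModule (RealCliffordAlgebra p q) M ∧
      IsSimpleModule (RealCliffordAlgebra p q) N ∧
      IsEmpty (M ≃ₗ[RealCliffordAlgebra p q] N) := by
  have hodd : Odd (p + q) := by rw [Nat.odd_iff]; omega
  have h2 : IsUnit (2 : RealCliffordAlgebra p q) := by
    rw [← map_ofNat (algebraMap ℝ _) 2]
    exact (IsUnit.mk0 (2 : ℝ) two_ne_zero).map _
  have hinv : involute (pseudoscalar p q) = -pseudoscalar p q := involute_pseudoscalar hodd
  exact exists_isSimpleModule_not_linearEquiv (pseudoscalar p q) (pseudoscalar_commute hodd)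
    (pseudoscalar_mul_self h) (ne_one_of_map_eq_neg involute.toRingHom hinv h2.ne_zero)
    (ne_neg_one_of_map_eq_neg involute.toRingHom hinv h2.ne_zero) h2
end

section
/- All complexifications of the real Clifford algebras of a given rank are isomorphic: for every natural number n and all natural numbers m, m' with m ≤ n and m' ≤ n, the complexified algebras ℂ ⊗_ℝ C(m, n−m) and ℂ ⊗_ℝ C(m', n−m') are isomorphic as ℂ-algebras. -/
open scoped TensorProduct

open QuadraticMap in
/-- Base change of a weighted sum of squares is a weighted sum of squares. -/
noncomputable def baseChangeWeightedIso {ι : Type*} [Fintype ι] [DecidableEq ι] (w : ι → ℝ) :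
    QuadraticMap.IsometryEquiv (QuadraticForm.baseChange ℂ (weightedSumSquares ℝ w))
      (weightedSumSquares ℂ (fun i => (w i : ℂ))) := by
  refine ⟨TensorProduct.piScalarRight ℝ ℂ ℂ ι, ?_⟩
  suffices h : (weightedSumSquares ℂ (fun i => (w i : ℂ))).comp
      (TensorProduct.piScalarRight ℝ ℂ ℂ ι).toLinearMap
      = QuadraticForm.baseChange ℂ (weightedSumSquares ℝ w) by
    intro m
    exact congrFun (congrArg DFunLike.coe h) m
  refine (baseChange_ext ?_).symm
  intro m
  rw [QuadraticForm.baseChange_tmul]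
  simp only [QuadraticMap.comp_apply, LinearEquiv.coe_coe,
    TensorProduct.piScalarRight_apply, TensorProduct.piScalarRightHom_tmul]
  rw [weightedSumSquares_apply, weightedSumSquares_apply]
  simp only [Complex.real_smul, smul_eq_mul]
  push_cast
  simp

open QuadraticMap in
/-- Reindexing sum of squares along an equality of cardinalities. -/
noncomputable def sumSquaresCast (a b : ℕ) (h : a = b) :
    QuadraticMap.IsometryEquiv (weightedSumSquares ℂ (1 : Fin a → ℂ))
      (weightedSumSquares ℂ (1 : Fin b → ℂ)) := by
  subst h; exact QuadraticMap.IsometryEquiv.refl _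

open QuadraticMap in
noncomputable def weightCongr {ι : Type*} [Fintype ι] {w w' : ι → ℂ} (h : w = w') :
    QuadraticMap.IsometryEquiv (QuadraticMap.weightedSumSquares ℂ w)
      (QuadraticMap.weightedSumSquares ℂ w') :=
  h ▸ QuadraticMap.IsometryEquiv.refl _

open QuadraticMap in
/-- The base change of `Qpq p q` is isometric to the sum of squares over `ℂ`. -/
noncomputable def QpqBaseChangeIso (p q : ℕ) :
    QuadraticMap.IsometryEquiv (QuadraticForm.baseChange ℂ (Qpq p q))
      (weightedSumSquares ℂ (1 : Fin (p + q) → ℂ)) := by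
  refine (baseChangeWeightedIso _).trans ?_
  refine (QuadraticForm.isometryEquivSumSquares _).trans (weightCongr ?_)
  ext i
  by_cases hi : (i : ℕ) < p <;> simp [hi]

/-- All complexifications `ℂ ⊗_ℝ C(m, n−m)`, `m ≤ n`, of the real Clifford algebras of a
given rank `n` are isomorphic as `ℂ`-algebras. -/
theorem complexified_clifford_iso (n m m' : ℕ) (hm : m ≤ n) (hm' : m' ≤ n) :
    Nonempty ((ℂ ⊗[ℝ] RealCliffordAlgebra m (n - m)) ≃ₐ[ℂ]
      (ℂ ⊗[ℝ] RealCliffordAlgebra m' (n - m'))) := by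
  refine ⟨((CliffordAlgebra.equivBaseChange ℂ (Qpq m (n - m))).symm.trans ?_).trans
    (CliffordAlgebra.equivBaseChange ℂ (Qpq m' (n - m')))⟩
  refine CliffordAlgebra.equivOfIsometry ?_
  exact ((QpqBaseChangeIso m (n - m)).trans
    (sumSquaresCast _ _ (by omega))).trans (QpqBaseChangeIso m' (n - m')).symm
end
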